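/- Suppose (P, ≤) is a partial order together with a family of preorders ≤_κ (κ ranging over regular cardinals) satisfying: p ≤_κ q implies p ≤ q. Assume κ-density reduction: for every dense D ⊆ P and p ∈ P there exist q ≤_κ p and d ⊆ D with |d| ≤ κ such that every r ≤ q extends to some s with s ≤ an element of d. Then for any sequence ⟨D_i : i < κ⟩ of dense subsets of P and any p ∈ P, assuming κ-closure of the ≤_κ orderings (every ≤_κ-descending sequence of length ≤ κ has a lower bound), there exist q ≤ p and a set d with |d| ≤ κ such that every r ≤ q is compatible with an element of D_i ∩ d for each i < κ. -/

import Mathlib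

/-!
Build a `≤_κ`-descending sequence `⟨q_i : i < κ⟩` below `p`: at stage `i`, `κ`-closure gives a
`≤_κ`-lower bound of the earlier terms, and density reduction for `D_i` strengthens it to `q_i`
together with a set `d_i ⊆ D_i` of size `≤ κ` that is predense below `q_i`. A final lower bound
`q` of the whole sequence lies below every `q_i`, so every `d_i` is predense below `q`, and
`d = ⋃ d_i` has size `≤ κ · κ = κ`.
-/

open Cardinal

def Compat {P : Type*} [PartialOrder P] (p q : P) : Prop := ∃ r, r ≤ p ∧ r ≤ q

def SeqClosed {α : Type*} (r : α → α → Prop) (o : Ordinal) : Prop :=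
  ∀ δ ≤ o, ∀ f : Ordinal → α, (∀ i j, i ≤ j → j < δ → r (f j) (f i)) → ∃ b, ∀ i < δ, r b (f i)

section Fusion

variable {α : Type*} {r : α → α → Prop} [Std.Refl r] [IsTrans α r] {o : Ordinal}

theorem SeqClosed.exists_lowerBound (h : SeqClosed r o) {δ : Ordinal} (hδ : δ ≤ o)
    {f : Ordinal → α} {p : α} (hp : ∀ i < δ, r (f i) p) (hf : ∀ i < δ, ∀ j < i, r (f i) (f j)) :
    ∃ b, r b p ∧ ∀ i < δ, r b (f i) := by
  rcases eq_or_ne δ 0 with rfl | hδ0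
  · exact ⟨p, Std.Refl.refl p, fun _ hi => absurd hi not_lt_zero⟩
  have h0 : 0 < δ := pos_iff_ne_zero.2 hδ0
  obtain ⟨b, hb⟩ := h δ hδ f fun i j hij hj =>
    hij.eq_or_lt.elim (fun e => e ▸ Std.Refl.refl _) (hf j hj i)
  exact ⟨b, _root_.trans (hb 0 h0) (hp 0 h0), hb⟩

theorem SeqClosed.exists_fusion (h : SeqClosed r o) {Q : Ordinal → α → Prop}
    (hQ : ∀ i < o, ∀ b, ∃ q, r q b ∧ Q i q) (p : α) :
    ∃ q, r q p ∧ ∀ i < o, ∃ q', r q q' ∧ Q i q' := by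
  classical
  choose step hstep hQstep using hQ
  let F : Ordinal → α := Ordinal.lt_wf.fix fun i F =>
    if hi : i < o ∧ ∃ b, r b p ∧ ∀ j (hj : j < i), r b (F j hj) then
      step i hi.1 hi.2.choose
    else p
  have hFix : ∀ i, F i = if hi : i < o ∧ ∃ b, r b p ∧ ∀ j (_ : j < i), r b (F j) then
      step i hi.1 hi.2.choose else p :=
    Ordinal.lt_wf.fix_eq _
  have hF : ∀ i < o, r (F i) p ∧ Q i (F i) ∧ ∀ j < i, r (F i) (F j) := by
    intro i
    induction i using WellFoundedLT.induction with
    | ind i IH =>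
      intro hi
      have hex : ∃ b, r b p ∧ ∀ j (_ : j < i), r b (F j) := h.exists_lowerBound hi.le
        (fun j hj => (IH j hj (hj.trans hi)).1) (fun j hj => (IH j hj (hj.trans hi)).2.2)
      have hFi : F i = step i hi hex.choose := by
        rw [hFix]
        exact dif_pos ⟨hi, hex⟩
      rw [hFi]
      exact ⟨_root_.trans (hstep i hi _) hex.choose_spec.1, hQstep i hi _,
        fun j hj => _root_.trans (hstep i hi _) (hex.choose_spec.2 j hj)⟩
  obtain ⟨q, hqp, hqF⟩ := h.exists_lowerBound le_rfl (fun i hi => (hF i hi).1)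
    (fun i hi => (hF i hi).2.2)
  exact ⟨q, hqp, fun i hi => ⟨F i, hqF i hi, (hF i hi).2.1⟩⟩

end Fusion

section Predense

variable {P : Type*} [PartialOrder P]

def PredenseBelow (d : Set P) (q : P) : Prop := ∀ r ≤ q, ∃ x ∈ d, Compat r x

theorem PredenseBelow.mono {d d' : Set P} {q q' : P} (h : PredenseBelow d q) (hd : d ⊆ d')
    (hq : q' ≤ q) : PredenseBelow d' q' := fun r hr => by
  obtain ⟨x, hx, hrx⟩ := h r (hr.trans hq)
  exact ⟨x, hd hx, hrx⟩

end Predense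

theorem stmt4 {P : Type*} [PartialOrder P] (κ : Cardinal) (hκ : κ.IsRegular)
    (leK : P → P → Prop)
    (hrefl : ∀ p, leK p p) (htrans : ∀ p q r, leK p q → leK q r → leK p r)
    (hrefine : ∀ p q, leK p q → p ≤ q)
    -- κ-density reduction
    (hred : ∀ D : Set P, (∀ p : P, ∃ q, q ≤ p ∧ q ∈ D) →
      ∀ p : P, ∃ q, leK q p ∧ ∃ d : Set P, d ⊆ D ∧ #d ≤ κ ∧
        ∀ r, r ≤ q → ∃ s, s ≤ r ∧ ∃ x ∈ d, s ≤ x)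
    -- κ-closure of the ≤_κ orderings
    (hclosed : ∀ δ : Ordinal, δ ≤ κ.ord → ∀ f : Ordinal → P,
      (∀ i j, i ≤ j → j < δ → leK (f j) (f i)) →
      ∃ p : P, ∀ i, i < δ → leK p (f i))
    (D : Ordinal → Set P)
    (hD : ∀ i, i < κ.ord → ∀ p : P, ∃ q, q ≤ p ∧ q ∈ D i)
    (p : P) :
    ∃ q, q ≤ p ∧ ∃ d : Set P, #d ≤ κ ∧
      ∀ i, i < κ.ord → ∀ r, r ≤ q → ∃ x ∈ D i ∩ d, Compat r x := by
  have : Std.Refl leK := ⟨hrefl⟩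
  have : IsTrans P leK := ⟨htrans⟩
  have hreduce : ∀ i < κ.ord, ∀ b, ∃ q, leK q b ∧ ∃ d ⊆ D i, #d ≤ κ ∧ PredenseBelow d q := by
    intro i hi b
    obtain ⟨q, hqb, d, hdD, hdκ, hdq⟩ := hred (D i) (hD i hi) b
    refine ⟨q, hqb, d, hdD, hdκ, fun r hr => ?_⟩
    obtain ⟨s, hsr, x, hxd, hsx⟩ := hdq r hr
    exact ⟨x, hxd, s, hsr, hsx⟩
  obtain ⟨q, hqp, hq⟩ := SeqClosed.exists_fusion (r := leK) hclosed hreduce p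
  choose! q' hqq' d hdD hdκ hdq' using hq
  refine ⟨q, hrefine _ _ hqp, ⋃ i < κ.ord, d i,
    mk_biUnion_le_of_le (by simp) hκ.aleph0_le d hdκ, fun i hi => ?_⟩
  exact (hdq' i hi).mono (Set.subset_inter (hdD i hi) (Set.subset_biUnion_of_mem hi))
    (hrefine _ _ (hqq' i hi))
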